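/- Let D be a finite set and R = 𝔽₂[t_k : k ∈ D]/(t_k²). Fix J ⊆ D and set J̄ = D ∖ J. For L, L' ⊆ J define θ_{L,L'} = Σ_{M ⊆ J̄} e_{M∪L} ⊗ e_{(J̄∖M) ∪ (J∖L')} ∈ R ⊗ R, and θ_L = θ_{L,L}. Define composition of α, β ∈ R ⊗ R by (β ∘ α) = Σ over basis expansions using the pairing deg (coefficient of e_D): explicitly, if α = Σ e_A ⊗ e_B and β = Σ e_C ⊗ e_E, then β∘α = Σ deg(e_B e_C) · (e_A ⊗ e_E). Then for all L, L', N ⊆ J: θ_{L,N} ∘ θ_{L',L} = θ_{L',N}. In particular θ_{L'} ∘ θ_L = θ_L if L = L' and 0 otherwise, so the θ_L are pairwise orthogonal idempotents. -/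

import Mathlib

/-!
A product `e_B e_C` is `e_{B ∪ C}` or `0` according as `B` and `C` are disjoint, so
`deg (e_B e_C) = 1` exactly when `C = Bᶜ`. In `θ_{P,N} ∘ θ_{L',P'}` the summand indexed by
`M, M' ⊆ J̄` pairs `e_{(J̄ ∖ M') ∪ (J ∖ P')}` with `e_{M ∪ P}`, and the complement of the first set
is `M' ∪ P'`; since `J̄` and `J` are disjoint, `M ∪ P = M' ∪ P'` forces `M = M'` and `P = P'`.
So only the diagonal `M = M'` survives, and only when `P = P'`, leaving `θ_{L',N}`.
-/

open MvPolynomial Finset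

set_option synthInstance.maxHeartbeats 1000000
set_option maxHeartbeats 1000000

/-- The quotient ring 𝔽₂[t_k : k ∈ D]/(t_k²). -/
abbrev Rq (D : Type*) : Type _ :=
  MvPolynomial D (ZMod 2) ⧸
    Ideal.span (Set.range fun k : D => (X k : MvPolynomial D (ZMod 2)) ^ 2)

/-- The class of the square-free monomial ∏_{k ∈ I} t_k. -/
noncomputable def eMon {D : Type*} (I : Finset D) : Rq D :=
  Ideal.Quotient.mk _ (∏ k ∈ I, X k)

lemma eMon_mul {D : Type*} [DecidableEq D] (B C : Finset D) :
    eMon B * eMon C = if Disjoint B C then eMon (B ∪ C) else 0 := by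
  unfold eMon
  rw [← map_mul]
  split_ifs with h
  · rw [← prod_union h]
  · obtain ⟨k, hkB, hkC⟩ := not_disjoint_iff.mp h
    rw [Ideal.Quotient.eq_zero_iff_mem]
    have hsq : (∏ i ∈ B, (X i : MvPolynomial D (ZMod 2))) * ∏ i ∈ C, X i
        = ((∏ i ∈ B.erase k, X i) * ∏ i ∈ C.erase k, X i) * X k ^ 2 := by
      rw [← prod_erase_mul B _ hkB, ← prod_erase_mul C _ hkC]
      ring
    rw [hsq]
    exact Ideal.mul_mem_left _ _ (Ideal.subset_span ⟨k, rfl⟩)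

open scoped TensorProduct

/-- The projector θ_{L,L'} = Σ_{M ⊆ J̄} e_{M∪L} ⊗ e_{(J̄∖M) ∪ (J∖L')}. -/
noncomputable def theta {D : Type*} [Fintype D] [DecidableEq D]
    (J L L' : Finset D) : (Rq D) ⊗[ZMod 2] (Rq D) :=
  ∑ M ∈ (Jᶜ).powerset, eMon (M ∪ L) ⊗ₜ[ZMod 2] eMon ((Jᶜ \ M) ∪ (J \ L'))

lemma comp_sum_tmul {D : Type*} (deg : Rq D →ₗ[ZMod 2] ZMod 2)
    (comp : (Rq D) ⊗[ZMod 2] (Rq D) →ₗ[ZMod 2]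
      (Rq D) ⊗[ZMod 2] (Rq D) →ₗ[ZMod 2] (Rq D) ⊗[ZMod 2] (Rq D))
    (hcomp : ∀ A B C E : Finset D,
      comp (eMon C ⊗ₜ[ZMod 2] eMon E) (eMon A ⊗ₜ[ZMod 2] eMon B)
        = deg (eMon B * eMon C) • (eMon A ⊗ₜ[ZMod 2] eMon E))
    {ι κ : Type*} (s : Finset ι) (t : Finset κ) (C E : ι → Finset D) (A B : κ → Finset D) :
    comp (∑ i ∈ s, eMon (C i) ⊗ₜ[ZMod 2] eMon (E i)) (∑ j ∈ t, eMon (A j) ⊗ₜ[ZMod 2] eMon (B j))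
      = ∑ i ∈ s, ∑ j ∈ t, deg (eMon (B j) * eMon (C i)) • (eMon (A j) ⊗ₜ[ZMod 2] eMon (E i)) := by
  simp only [map_sum, LinearMap.sum_apply, hcomp]
  exact sum_comm

section Sets

variable {D : Type*} [Fintype D] [DecidableEq D] {J M M' P P' : Finset D}

lemma compl_sdiff_union_sdiff (hM : M ⊆ Jᶜ) (hP : P ⊆ J) :
    ((Jᶜ \ M) ∪ (J \ P))ᶜ = M ∪ P := by
  ext x
  have := @hM x
  have := @hP x
  simp only [mem_compl, mem_union, mem_sdiff] at *
  tauto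

lemma union_eq_union_iff_of_subset_compl (hM : M ⊆ Jᶜ) (hM' : M' ⊆ Jᶜ) (hP : P ⊆ J) (hP' : P' ⊆ J) :
    M ∪ P = M' ∪ P' ↔ M = M' ∧ P = P' := by
  refine ⟨fun h => ⟨?_, ?_⟩, fun ⟨hMM, hPP⟩ => hMM ▸ hPP ▸ rfl⟩ <;> ext x <;>
  · have := congrArg (x ∈ ·) h
    have := @hM x
    have := @hM' x
    have := @hP x
    have := @hP' x
    simp only [mem_compl, mem_union, eq_iff_iff] at *
    tauto

end Sets

section Composition

variable {D : Type*} [Fintype D] [DecidableEq D]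

lemma deg_eMon_mul (deg : Rq D →ₗ[ZMod 2] ZMod 2)
    (hdeg : ∀ I : Finset D, deg (eMon I) = if I = univ then 1 else 0) (B C : Finset D) :
    deg (eMon B * eMon C) = if C = Bᶜ then 1 else 0 := by
  rw [eMon_mul]
  by_cases hd : Disjoint B C
  · have hcompl : B ∪ C = univ ↔ C = Bᶜ := by
      rw [eq_compl_iff_isCompl, isCompl_comm, isCompl_iff, codisjoint_iff]
      simp [hd]
    rw [if_pos hd, hdeg]
    exact if_congr hcompl rfl rfl
  · rw [if_neg hd, map_zero, if_neg]
    rintro rfl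
    exact hd disjoint_compl_right

lemma comp_theta_theta (J : Finset D) (deg : Rq D →ₗ[ZMod 2] ZMod 2)
    (hdeg : ∀ I : Finset D, deg (eMon I) = if I = univ then 1 else 0)
    (comp : (Rq D) ⊗[ZMod 2] (Rq D) →ₗ[ZMod 2]
      (Rq D) ⊗[ZMod 2] (Rq D) →ₗ[ZMod 2] (Rq D) ⊗[ZMod 2] (Rq D))
    (hcomp : ∀ A B C E : Finset D,
      comp (eMon C ⊗ₜ[ZMod 2] eMon E) (eMon A ⊗ₜ[ZMod 2] eMon B)
        = deg (eMon B * eMon C) • (eMon A ⊗ₜ[ZMod 2] eMon E))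
    (P P' L' N : Finset D) (hP : P ⊆ J) (hP' : P' ⊆ J) :
    comp (theta J P N) (theta J L' P') = if P = P' then theta J L' N else 0 := by
  have hpair : ∀ M ∈ (Jᶜ).powerset, ∀ M' ∈ (Jᶜ).powerset,
      deg (eMon ((Jᶜ \ M') ∪ (J \ P')) * eMon (M ∪ P)) = if M = M' ∧ P = P' then 1 else 0 := by
    intro M hM M' hM'
    rw [mem_powerset] at hM hM'
    rw [deg_eMon_mul deg hdeg, compl_sdiff_union_sdiff hM' hP']
    exact if_congr (union_eq_union_iff_of_subset_compl hM hM' hP hP') rfl rfl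
  unfold theta
  rw [comp_sum_tmul deg comp hcomp]
  split_ifs with hPP
  · refine sum_congr rfl fun M hM => ?_
    rw [sum_congr rfl fun M' hM' => by rw [hpair M hM M' hM']]
    simp [hPP, ite_smul, sum_ite_eq, hM]
  · refine sum_eq_zero fun M hM => sum_eq_zero fun M' hM' => ?_
    simp [hpair M hM M' hM', hPP]

end Composition

/-- Composition rule θ_{L,N} ∘ θ_{L',L} = θ_{L',N} for the correspondences of
Theorem 9.4; in particular the θ_L are pairwise orthogonal idempotents. -/
theorem theta_comp {D : Type*} [Fintype D] [DecidableEq D] (J : Finset D)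
    (deg : Rq D →ₗ[ZMod 2] ZMod 2)
    (hdeg : ∀ I : Finset D, deg (eMon I) = if I = Finset.univ then 1 else 0)
    -- composition of correspondences: β ∘ α, bilinear, determined on monomials
    (comp : (Rq D) ⊗[ZMod 2] (Rq D) →ₗ[ZMod 2]
      (Rq D) ⊗[ZMod 2] (Rq D) →ₗ[ZMod 2] (Rq D) ⊗[ZMod 2] (Rq D))
    (hcomp : ∀ A B C E : Finset D,
      comp (eMon C ⊗ₜ[ZMod 2] eMon E) (eMon A ⊗ₜ[ZMod 2] eMon B)
        = deg (eMon B * eMon C) • (eMon A ⊗ₜ[ZMod 2] eMon E)) :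
    (∀ L L' N : Finset D, L ⊆ J → L' ⊆ J → N ⊆ J →
      comp (theta J L N) (theta J L' L) = theta J L' N) ∧
    (∀ L L' : Finset D, L ⊆ J → L' ⊆ J →
      comp (theta J L' L') (theta J L L)
        = if L = L' then theta J L L else 0) := by
  have key := comp_theta_theta J deg hdeg comp hcomp
  refine ⟨fun L L' N hL _ _ => by simpa using key L L L' N hL hL, fun L L' hL hL' => ?_⟩
  rw [key L' L L L' hL' hL]
  by_cases h : L = L'
  · subst h
    simp
  · simp [h, Ne.symm h]
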